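/- arXiv:2404.06059 — 8 statements merged into one kernel-verified Lean document; each statement's English description precedes it below -/
import Mathlib

section
/- Let n ≥ 1 and let x be an n-bit vector (x : BitVec n). Define y : BitVec (n-1) by letting the i-th bit of y equal (¬ x.msb) AND (the i-th bit of x) for every i < n-1 (i.e., the low n-1 bits of x masked by the negated sign bit). Then (y.toNat : ℤ) = max(x.toInt, 0). (This is the logical correctness of the constant-T-depth ReLU circuit built from an X gate, n-1 shared-control Toffoli gates, and an X gate, for two's-complement input.) -/
/-!
The masked register is `0` when the sign bit is set and the low `n - 1` bits of `x` otherwise.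
With the sign bit clear, `x` already fits in `n - 1` bits and `x.toInt = x.toNat`; with it set,
`x.toInt < 0`. In both cases the register holds `max x.toInt 0`.
-/

namespace BitVec

variable {w : ℕ}

theorem toNat_setWidth_pred_of_msb_false {x : BitVec w} (h : x.msb = false) :
    (x.setWidth (w - 1)).toNat = x.toNat := by
  rw [toNat_setWidth, Nat.mod_eq_of_lt (toNat_lt_of_msb_false h)]

theorem max_toInt_zero_eq_cond (x : BitVec w) :
    max x.toInt 0 = if x.msb then 0 else (x.toNat : ℤ) := by
  cases h : x.msb
  · simp [toInt_eq_toNat_of_msb h]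
  · simp [(toInt_neg_of_msb_true h).le]

theorem eq_ite_msb_of_getLsbD_eq_not_msb_and {x : BitVec w} {y : BitVec (w - 1)}
    (hy : ∀ i < w - 1, y.getLsbD i = (!x.msb && x.getLsbD i)) :
    y = if x.msb then 0#(w - 1) else x.setWidth (w - 1) := by
  refine eq_of_getLsbD_eq fun i hi => ?_
  rw [hy i hi]
  cases x.msb <;> simp [hi]

end BitVec

theorem relu_circuit_twos_complement_general (n : ℕ) (x : BitVec n)
    (y : BitVec (n - 1)) (hy : ∀ i < n - 1, y.getLsbD i = (!x.msb && x.getLsbD i)) :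
    (y.toNat : ℤ) = max x.toInt 0 := by
  rw [BitVec.eq_ite_msb_of_getLsbD_eq_not_msb_and hy, BitVec.max_toInt_zero_eq_cond]
  cases h : x.msb
  · simp [BitVec.toNat_setWidth_pred_of_msb_false h]
  · simp

/-- Correctness of the constant-T-depth ReLU circuit for two's-complement input:
if every bit `i < n-1` of `y` equals `(¬ msb x) AND (bit i of x)`, then the
unsigned value of `y` is `max(x.toInt, 0)`. -/
theorem relu_circuit_twos_complement (n : ℕ) (hn : 1 ≤ n) (x : BitVec n)
    (y : BitVec (n - 1)) (hy : ∀ i < n - 1, y.getLsbD i = (!x.msb && x.getLsbD i)) :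
    (y.toNat : ℤ) = max x.toInt 0 :=
  relu_circuit_twos_complement_general n x y hy
end

section
/- Let n ≥ 1 and let x be an n-bit vector in sign-magnitude (true form) representation: its value is v = (-1)^s · m, where s = x.msb and m is the unsigned value of the low n-1 bits of x. Define y : BitVec (n-1) by letting the i-th bit of y equal (¬ s) AND (the i-th bit of x) for every i < n-1. Then (y.toNat : ℤ) = max(v, 0). (This shows the ReLU circuit remains valid for sign-magnitude coded input.) -/
namespace BitVec

theorem toNat_eq_ite_of_getLsbD_eq_not_and {m n : ℕ} {b : Bool} {x : BitVec n} {y : BitVec m}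
    (hy : ∀ i < m, y.getLsbD i = (!b && x.getLsbD i)) :
    y.toNat = if b then 0 else x.toNat % 2 ^ m := by
  cases b with
  | true =>
    have hy_zero : y = 0 := eq_of_getLsbD_eq fun i hi => by simp [hy i hi]
    simp [hy_zero]
  | false =>
    have hy_trunc : y = x.setWidth m := eq_of_getLsbD_eq fun i hi => by rw [hy i hi]; simp [hi]
    simp [hy_trunc, toNat_setWidth]

end BitVec

theorem max_neg_one_pow_toNat_mul_zero (b : Bool) (k : ℕ) :
    max ((-1 : ℤ) ^ b.toNat * k) 0 = if b then 0 else (k : ℤ) := by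
  cases b <;> simp

theorem relu_circuit_sign_magnitude_general (n : ℕ) (x : BitVec n)
    (y : BitVec (n - 1)) (hy : ∀ i < n - 1, y.getLsbD i = (!x.msb && x.getLsbD i)) :
    (y.toNat : ℤ) =
      max ((-1 : ℤ) ^ x.msb.toNat * ((x.toNat % 2 ^ (n - 1) : ℕ) : ℤ)) 0 := by
  rw [BitVec.toNat_eq_ite_of_getLsbD_eq_not_and hy, max_neg_one_pow_toNat_mul_zero]
  split <;> simp

/-- Correctness of the ReLU circuit for sign-magnitude (true form) input:
the value of `x` is `(-1)^(msb x) * m` where `m` is the unsigned value of the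
low `n-1` bits of `x`.  If every bit `i < n-1` of `y` equals
`(¬ msb x) AND (bit i of x)`, then the unsigned value of `y` is `max(v, 0)`. -/
theorem relu_circuit_sign_magnitude (n : ℕ) (hn : 1 ≤ n) (x : BitVec n)
    (y : BitVec (n - 1)) (hy : ∀ i < n - 1, y.getLsbD i = (!x.msb && x.getLsbD i)) :
    (y.toNat : ℤ) =
      max ((-1 : ℤ) ^ x.msb.toNat * ((x.toNat % 2 ^ (n - 1) : ℕ) : ℤ)) 0 :=
  relu_circuit_sign_magnitude_general n x y hy
end

section
/- Let n ≥ 1. Suppose g : BitVec n → BitVec (n-1) × BitVec r is an injective map whose first component computes the ReLU function, i.e., (((g x).1).toNat : ℤ) = max(x.toInt, 0) for all x : BitVec n. Then r ≥ n; in particular, any reversible computation of the n-bit ReLU function uses at least (n-1) + n = 2n - 1 bits in total. (There are 2^{n-1} + 1 inputs with x.toInt ≤ 0, all sharing the output value 0, so injectivity forces 2^r ≥ 2^{n-1} + 1.) -/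
/-!
The `2 ^ (n - 1) + 1` inputs with `x.toInt ≤ 0` all have ReLU output `0`, so by injectivity of
`g` their second components are pairwise distinct. Hence `2 ^ (n - 1) < 2 ^ r`, i.e. `n ≤ r`.
-/

open Finset

theorem Function.Injective.card_filter_fst_eq_le {α β γ : Type*} [Fintype α] [Fintype γ]
    [DecidableEq β] {g : α → β × γ} (hg : Function.Injective g) (b : β) :
    #{x | (g x).1 = b} ≤ Fintype.card γ :=
  card_le_card_of_injOn (fun x => (g x).2) (fun _ _ => mem_univ _) fun _ hx _ hy hxy =>
    hg (Prod.ext ((mem_filter.1 hx).2.trans (mem_filter.1 hy).2.symm) hxy)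

theorem BitVec.image_toInt_filter_toInt_nonpos {n : ℕ} (hn : 0 < n) :
    image BitVec.toInt {x : BitVec n | x.toInt ≤ 0} = Icc (-2 ^ (n - 1)) 0 := by
  ext k
  simp only [mem_image, mem_filter, mem_univ, true_and, mem_Icc]
  constructor
  · rintro ⟨x, hx, rfl⟩
    exact ⟨x.le_toInt, hx⟩
  · rintro ⟨hlo, hhi⟩
    have hpos : (0 : ℤ) < 2 ^ (n - 1) := by positivity
    have hk : (BitVec.ofInt n k).toInt = k := BitVec.toInt_ofInt_eq_self hn hlo (by omega)
    exact ⟨BitVec.ofInt n k, hk.symm ▸ hhi, hk⟩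

theorem BitVec.card_filter_toInt_nonpos {n : ℕ} (hn : 0 < n) :
    #{x : BitVec n | x.toInt ≤ 0} = 2 ^ (n - 1) + 1 := by
  rw [← card_image_of_injective _ fun _ _ => BitVec.eq_of_toInt_eq,
    image_toInt_filter_toInt_nonpos hn, Int.card_Icc, sub_neg_eq_add, zero_add]
  norm_cast
  exact Nat.add_comm _ _

/-- Any reversible (injective) computation of the `n`-bit ReLU whose first
component stores the `(n-1)`-bit result needs at least `n` further bits:
there are `2^(n-1) + 1` inputs with `x.toInt ≤ 0`, all sharing output `0`. -/
theorem relu_reversible_lower_bound (n r : ℕ) (hn : 1 ≤ n)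
    (g : BitVec n → BitVec (n - 1) × BitVec r)
    (hinj : Function.Injective g)
    (hg : ∀ x : BitVec n, (((g x).1).toNat : ℤ) = max x.toInt 0) :
    n ≤ r := by
  have hfst_eq_zero : ∀ x : BitVec n, x.toInt ≤ 0 → (g x).1 = 0 := fun x hx => by
    have hrelu := hg x
    rw [max_eq_right hx] at hrelu
    exact BitVec.eq_of_toNat_eq (by exact_mod_cast hrelu)
  have hcard : 2 ^ (n - 1) + 1 ≤ 2 ^ r :=
    calc 2 ^ (n - 1) + 1 = #{x : BitVec n | x.toInt ≤ 0} :=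
          (BitVec.card_filter_toInt_nonpos hn).symm
      _ ≤ #{x | (g x).1 = 0} := card_le_card (monotone_filter_right _ fun x _ => hfst_eq_zero x)
      _ ≤ Fintype.card (BitVec r) := hinj.card_filter_fst_eq_le 0
      _ = 2 ^ r := FinEnum.card_eq_fintypeCard.symm.trans (FinEnum.card_bitVec r)
  have hlt : n - 1 < r := (Nat.pow_lt_pow_iff_right (by norm_num)).mp (Nat.lt_of_succ_le hcard)
  omega
end

section
/- Let Q be a type (of qubits), let m_1, …, m_D : Q → Q be involutions (m_d ∘ m_d = id), and let I be an index type. Suppose for each i ∈ I we are given sets S_{0,i} ⊆ Q that are pairwise disjoint, and sets S_{d,i} ⊆ Q for 1 ≤ d ≤ D satisfying S_{d,i} ⊆ S_{d-1,i} ∪ m_d '' S_{d-1,i}. Then for every q ∈ Q, the number of indices i ∈ I with q ∈ S_{D,i} is at most 2^D. (This is the influence-doubling lemma underlying the Ω(log n) depth lower bound for ReLU circuits.) -/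
/-!
A qubit `q` lies in `S d i` only if `q` or its partner `m d q` lies in `S (d-1) i`, so the number of
indices whose influence set contains `q` at most doubles per layer; at depth `0` it is at most one
by disjointness. Counting with `Set.encard` lets the induction run without finiteness side goals.
-/

open Set

theorem encard_setOf_mem_le_of_subset_union_image {Q I : Type*} {f : Q → Q}
    (hf : Function.Involutive f) {S T : I → Set Q} (hST : ∀ i, T i ⊆ S i ∪ f '' S i) (q : Q) :
    {i | q ∈ T i}.encard ≤ {i | q ∈ S i}.encard + {i | f q ∈ S i}.encard := by
  have hsub : {i | q ∈ T i} ⊆ {i | q ∈ S i} ∪ {i | f q ∈ S i} := fun i hi => by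
    simpa only [mem_union, mem_ofPred_eq, mem_image_iff_of_inverse hf.leftInverse hf.rightInverse]
      using hST i hi
  exact (encard_le_encard hsub).trans (encard_union_le _ _)

/-- Influence-doubling lemma: with layers given by involutions `m 1, …, m D` on
the qubits `Q`, pairwise disjoint initial sets `S 0 i`, and influence sets
satisfying `S d i ⊆ S (d-1) i ∪ m d '' S (d-1) i`, each qubit `q` belongs to
`S D i` for at most `2^D` indices `i`. -/
theorem influence_doubling {Q I : Type*} (D : ℕ) (m : ℕ → Q → Q)
    (hinv : ∀ d, 1 ≤ d → d ≤ D → m d ∘ m d = id)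
    (S : ℕ → I → Set Q)
    (hdisj : Pairwise fun i j => Disjoint (S 0 i) (S 0 j))
    (hS : ∀ d, 1 ≤ d → d ≤ D → ∀ i, S d i ⊆ S (d - 1) i ∪ m d '' S (d - 1) i)
    (q : Q) :
    {i | q ∈ S D i}.Finite ∧ {i | q ∈ S D i}.ncard ≤ 2 ^ D := by
  suffices h : ∀ d ≤ D, ∀ q : Q, {i | q ∈ S d i}.encard ≤ 2 ^ d by
    exact encard_le_coe_iff_finite_ncard_le.mp (by exact_mod_cast h D le_rfl q)
  intro d
  induction d with
  | zero =>
    intro _ q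
    simpa only [pow_zero, encard_le_one_iff_subsingleton] using
      subsingleton_setOfPred_mem_iff_pairwise_disjoint.mpr hdisj q
  | succ d ih =>
    intro hd q
    have hm : Function.Involutive (m (d + 1)) := congrFun (hinv (d + 1) d.succ_pos hd)
    calc {i | q ∈ S (d + 1) i}.encard
        ≤ {i | q ∈ S d i}.encard + {i | m (d + 1) q ∈ S d i}.encard :=
          encard_setOf_mem_le_of_subset_union_image hm (hS (d + 1) d.succ_pos hd) q
      _ ≤ 2 ^ d + 2 ^ d := add_le_add (ih (by omega) q) (ih (by omega) _)
      _ = 2 ^ (d + 1) := by rw [pow_succ, mul_two]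
end

section
/- Let Q be a type, let m_1, …, m_D : Q → Q be involutions, and let i range over Fin (n-1) for some n ≥ 2. Suppose the sets S_{0,i} ⊆ Q are pairwise disjoint and nonempty, and S_{d,i} ⊆ S_{d-1,i} ∪ m_d '' S_{d-1,i} for 1 ≤ d ≤ D. If there exists a single element q ∈ Q with q ∈ S_{D,i} for every i ∈ Fin (n-1), then n - 1 ≤ 2^D; equivalently, D ≥ log₂(n-1). (Since the sign qubit of an n-bit ReLU circuit must influence all n-1 output qubits, circuit depth is lower bounded by Ω(log n).) -/
/-!
Follow `q` backwards through the layers: if `S d i` meets a set `A`, then `S (d - 1) i` meets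
`A ∪ m d '' A`, because `m d` is an involution. Starting from `{q}`, after `D` steps every `S 0 i`
meets one set of at most `2 ^ D` qubits, and since the `S 0 i` are pairwise disjoint they meet it
in distinct points.
-/

open Finset Function

section

variable {Q : Type*}

/-- `backwardCone m d A` is the set of qubits at depth `0` that can reach `A` at depth `d`
through the layers `m 1, …, m d`. -/
def backwardCone [DecidableEq Q] (m : ℕ → Q → Q) : ℕ → Finset Q → Finset Q
  | 0, A => A
  | d + 1, A => backwardCone m d (A ∪ A.image (m (d + 1)))

theorem card_backwardCone_le [DecidableEq Q] (m : ℕ → Q → Q) (d : ℕ) (A : Finset Q) :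
    #(backwardCone m d A) ≤ 2 ^ d * #A := by
  induction d generalizing A with
  | zero => simp [backwardCone]
  | succ d ih =>
    calc #(backwardCone m (d + 1) A) ≤ 2 ^ d * #(A ∪ A.image (m (d + 1))) := ih _
      _ ≤ 2 ^ d * (#A + #A) := by
        gcongr
        exact (card_union_le _ _).trans (Nat.add_le_add_left card_image_le _)
      _ = 2 ^ (d + 1) * #A := by ring

theorem Function.Involutive.inter_union_image_nonempty {f : Q → Q} (hf : f.Involutive)
    {A B C : Set Q} (hB : B ⊆ C ∪ f '' C) (hBA : (B ∩ A).Nonempty) :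
    (C ∩ (A ∪ f '' A)).Nonempty := by
  obtain ⟨x, hxB, hxA⟩ := hBA
  rcases hB hxB with hxC | ⟨y, hyC, rfl⟩
  · exact ⟨x, hxC, Or.inl hxA⟩
  · exact ⟨y, hyC, Or.inr ⟨f y, hxA, hf y⟩⟩

theorem inter_backwardCone_nonempty [DecidableEq Q] (m : ℕ → Q → Q) (S : ℕ → Set Q) (d : ℕ)
    (hinv : ∀ k, 1 ≤ k → k ≤ d → (m k).Involutive)
    (hS : ∀ k, 1 ≤ k → k ≤ d → S k ⊆ S (k - 1) ∪ m k '' S (k - 1))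
    (A : Finset Q) (hA : (S d ∩ A).Nonempty) :
    (S 0 ∩ backwardCone m d A).Nonempty := by
  induction d generalizing A with
  | zero => exact hA
  | succ d ih =>
    have hstep : (S d ∩ ↑(A ∪ A.image (m (d + 1)))).Nonempty := by
      push_cast
      exact (hinv (d + 1) le_add_self le_rfl).inter_union_image_nonempty
        (hS (d + 1) le_add_self le_rfl) hA
    exact ih (fun k hk hkd => hinv k hk (hkd.trans d.le_succ))
      (fun k hk hkd => hS k hk (hkd.trans d.le_succ)) _ hstep

theorem Fintype.card_le_card_of_pairwise_disjoint_of_inter_nonempty {ι α : Type*} [Fintype ι]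
    {s : ι → Set α} (hs : Pairwise (Disjoint on s)) (t : Finset α) (ht : ∀ i, (s i ∩ t).Nonempty) :
    Fintype.card ι ≤ #t :=
  card_le_card_of_forall_subsingleton (fun i x => x ∈ s i)
    (fun i _ => (ht i).imp fun _ hx => ⟨hx.2, hx.1⟩)
    (fun _ _ _ hi _ hj => by_contra fun hij => (hs hij).ne_of_mem hi.2 hj.2 rfl)

end

theorem relu_depth_lower_bound_log_general {Q : Type*} (n D : ℕ)
    (m : ℕ → Q → Q)
    (hinv : ∀ d, 1 ≤ d → d ≤ D → m d ∘ m d = id)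
    (S : ℕ → Fin (n - 1) → Set Q)
    (hdisj : Pairwise fun i j => Disjoint (S 0 i) (S 0 j))
    (hS : ∀ d, 1 ≤ d → d ≤ D → ∀ i, S d i ⊆ S (d - 1) i ∪ m d '' S (d - 1) i)
    (hq : ∃ q : Q, ∀ i, q ∈ S D i) :
    n - 1 ≤ 2 ^ D := by
  classical
  obtain ⟨q, hq⟩ := hq
  have hmeet : ∀ i, (S 0 i ∩ backwardCone m D {q}).Nonempty := fun i =>
    inter_backwardCone_nonempty m (S · i) D (fun d hd hdD => congrFun (hinv d hd hdD))
      (fun d hd hdD => hS d hd hdD i) {q} ⟨q, hq i, mem_singleton_self q⟩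
  calc n - 1 = Fintype.card (Fin (n - 1)) := (Fintype.card_fin _).symm
    _ ≤ #(backwardCone m D {q}) :=
      Fintype.card_le_card_of_pairwise_disjoint_of_inter_nonempty hdisj _ hmeet
    _ ≤ 2 ^ D := by simpa using card_backwardCone_le m D {q}

/-- Ω(log n) depth lower bound: if a single qubit `q` influences all `n-1`
output qubits (i.e. belongs to every `S D i` for pairwise disjoint nonempty
initial sets `S 0 i`), then `n - 1 ≤ 2^D`. -/
theorem relu_depth_lower_bound_log {Q : Type*} (n D : ℕ) (hn : 2 ≤ n)
    (m : ℕ → Q → Q)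
    (hinv : ∀ d, 1 ≤ d → d ≤ D → m d ∘ m d = id)
    (S : ℕ → Fin (n - 1) → Set Q)
    (hdisj : Pairwise fun i j => Disjoint (S 0 i) (S 0 j))
    (hne : ∀ i, (S 0 i).Nonempty)
    (hS : ∀ d, 1 ≤ d → d ≤ D → ∀ i, S d i ⊆ S (d - 1) i ∪ m d '' S (d - 1) i)
    (hq : ∃ q : Q, ∀ i, q ∈ S D i) :
    n - 1 ≤ 2 ^ D :=
  relu_depth_lower_bound_log_general n D m hinv S hdisj hS hq
end

section
/- Let n ≥ 2 and let m_1, …, m_D : ℤ × ℤ → ℤ × ℤ be involutions that move points only to L1-adjacent grid points (for every p, either m_d p = p or m_d p is at L1 distance 1 from p). Let o_1, …, o_{n-1} ∈ ℤ × ℤ be pairwise distinct, and define for each i the sets S_{0,i} = {o_i} and S_{d,i} ⊆ S_{d-1,i} ∪ m_d '' S_{d-1,i} for 1 ≤ d ≤ D. If there exists q ∈ ℤ × ℤ with q ∈ S_{D,i} for every i, then n - 1 ≤ 2D² + 2D + 1. Consequently D = Ω(√n). (This is the Ω(√n) depth lower bound for implementing the n-bit ReLU function on a 2D grid.) -/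
/-!
A gate of one layer moves a point by L1 distance at most one, so by induction on the depth every
point of `S d i` lies within L1 distance `d` of its origin `o i`. A common point `q` of all the
`S D i` therefore puts the `n - 1` distinct origins into the L1 ball of radius `D` around `q`,
which has `2 D² + 2 D + 1` points.
-/

open Finset

def l1Dist (p q : ℤ × ℤ) : ℕ :=
  (p.1 - q.1).natAbs + (p.2 - q.2).natAbs

theorem l1Dist_self (p : ℤ × ℤ) : l1Dist p p = 0 := by
  simp [l1Dist]

theorem l1Dist_comm (p q : ℤ × ℤ) : l1Dist p q = l1Dist q p := by
  unfold l1Dist; omega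

theorem l1Dist_triangle (p q r : ℤ × ℤ) : l1Dist p r ≤ l1Dist p q + l1Dist q r := by
  unfold l1Dist; omega

/-- Rotating by 45°, `(x, y) ↦ ((x + y + D) / 2, (x - y + D) / 2)` identifies the L1 ball of
radius `D` around the origin with `[0, D]² ⊔ [0, D - 1]²`, according to the parity of
`x + y + D`. -/
theorem card_le_of_forall_l1Dist_le {s : Finset (ℤ × ℤ)} {c : ℤ × ℤ} {D : ℕ}
    (hs : ∀ p ∈ s, l1Dist p c ≤ D) : #s ≤ 2 * D ^ 2 + 2 * D + 1 := by
  let even : ℕ × ℕ → ℤ × ℤ := fun ab => (c.1 + ab.1 + ab.2 - D, c.2 + ab.1 - ab.2)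
  let odd : ℕ × ℕ → ℤ × ℤ := fun ab => (c.1 + ab.1 + ab.2 + 1 - D, c.2 + ab.1 - ab.2)
  let cover := (range (D + 1) ×ˢ range (D + 1)).image even ∪ (range D ×ˢ range D).image odd
  have hcover : s ⊆ cover := by
    intro p hp
    have hp := hs p hp
    unfold l1Dist at hp
    obtain ⟨x, y⟩ := p
    simp only [cover, mem_union, mem_image, mem_product, mem_range, Prod.exists, Prod.mk.injEq,
      even, odd]
    rcases Int.emod_two_eq_zero_or_one (x - c.1 + y - c.2 + D) with hpar | hpar
    · left
      exact ⟨((x - c.1 + y - c.2 + D) / 2).toNat, ((x - c.1 - y + c.2 + D) / 2).toNat,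
        by omega⟩
    · right
      exact ⟨((x - c.1 + y - c.2 + D - 1) / 2).toNat, ((x - c.1 - y + c.2 + D - 1) / 2).toNat,
        by omega⟩
  calc #s ≤ #cover := card_le_card hcover
    _ ≤ #(range (D + 1) ×ˢ range (D + 1)) + #(range D ×ˢ range D) :=
        (card_union_le _ _).trans (add_le_add card_image_le card_image_le)
    _ = 2 * D ^ 2 + 2 * D + 1 := by simp only [card_product, card_range]; ring

theorem l1Dist_le_of_mem_of_subset_union_image {m : ℕ → ℤ × ℤ → ℤ × ℤ}
    {T : ℕ → Set (ℤ × ℤ)} {o : ℤ × ℤ} {D : ℕ}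
    (hloc : ∀ d, 1 ≤ d → d ≤ D → ∀ p, l1Dist (m d p) p ≤ 1)
    (hT0 : T 0 = {o}) (hT : ∀ d, 1 ≤ d → d ≤ D → T d ⊆ T (d - 1) ∪ m d '' T (d - 1)) :
    ∀ d ≤ D, ∀ p ∈ T d, l1Dist p o ≤ d := by
  intro d
  induction d with
  | zero =>
    intro _ p hp
    rw [hT0, Set.mem_singleton_iff] at hp
    simp [hp, l1Dist_self]
  | succ d ih =>
    intro hd p hp
    rcases hT (d + 1) d.succ_pos hd hp with hp' | ⟨p', hp', rfl⟩
    · exact (ih (by omega) p hp').trans d.le_succ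
    · calc l1Dist (m (d + 1) p') o ≤ l1Dist (m (d + 1) p') p' + l1Dist p' o :=
            l1Dist_triangle _ _ _
        _ ≤ 1 + d := add_le_add (hloc (d + 1) d.succ_pos hd p') (ih (by omega) p' hp')
        _ = d + 1 := add_comm 1 d

theorem relu_grid_depth_lower_bound_general (n D : ℕ)
    (m : ℕ → ℤ × ℤ → ℤ × ℤ)
    (hloc : ∀ d, 1 ≤ d → d ≤ D → ∀ p : ℤ × ℤ,
      m d p = p ∨ |(m d p).1 - p.1| + |(m d p).2 - p.2| = 1)
    (o : Fin (n - 1) → ℤ × ℤ) (ho : Function.Injective o)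
    (S : ℕ → Fin (n - 1) → Set (ℤ × ℤ))
    (hS0 : ∀ i, S 0 i = {o i})
    (hS : ∀ d, 1 ≤ d → d ≤ D → ∀ i, S d i ⊆ S (d - 1) i ∪ m d '' S (d - 1) i)
    (hq : ∃ q : ℤ × ℤ, ∀ i, q ∈ S D i) :
    n - 1 ≤ 2 * D ^ 2 + 2 * D + 1 := by
  obtain ⟨q, hq⟩ := hq
  have hstep : ∀ d, 1 ≤ d → d ≤ D → ∀ p, l1Dist (m d p) p ≤ 1 := by
    intro d hd1 hdD p
    rcases hloc d hd1 hdD p with hfix | hadj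
    · simp [hfix, l1Dist_self]
    · rw [Int.abs_eq_natAbs, Int.abs_eq_natAbs] at hadj
      unfold l1Dist; omega
  have hnear : ∀ p ∈ univ.image o, l1Dist p q ≤ D := by
    simp only [mem_image, mem_univ, true_and, forall_exists_index, forall_apply_eq_imp_iff]
    intro i
    rw [l1Dist_comm]
    exact l1Dist_le_of_mem_of_subset_union_image hstep (hS0 i) (fun d hd1 hdD => hS d hd1 hdD i)
      D le_rfl q (hq i)
  calc n - 1 = #(univ.image o) := by rw [card_image_of_injective _ ho, card_univ, Fintype.card_fin]
    _ ≤ 2 * D ^ 2 + 2 * D + 1 := card_le_of_forall_l1Dist_le hnear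

/-- Ω(√n) depth lower bound for ReLU on a 2D grid: with layers given by
involutions moving points only to L1-adjacent grid points, pairwise distinct
origins `o i`, `S 0 i = {o i}` and `S d i ⊆ S (d-1) i ∪ m d '' S (d-1) i`,
if a single point `q` belongs to every `S D i` then `n - 1 ≤ 2D² + 2D + 1`. -/
theorem relu_grid_depth_lower_bound (n D : ℕ) (hn : 2 ≤ n)
    (m : ℕ → ℤ × ℤ → ℤ × ℤ)
    (hinv : ∀ d, 1 ≤ d → d ≤ D → m d ∘ m d = id)
    (hloc : ∀ d, 1 ≤ d → d ≤ D → ∀ p : ℤ × ℤ,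
      m d p = p ∨ |(m d p).1 - p.1| + |(m d p).2 - p.2| = 1)
    (o : Fin (n - 1) → ℤ × ℤ) (ho : Function.Injective o)
    (S : ℕ → Fin (n - 1) → Set (ℤ × ℤ))
    (hS0 : ∀ i, S 0 i = {o i})
    (hS : ∀ d, 1 ≤ d → d ≤ D → ∀ i, S d i ⊆ S (d - 1) i ∪ m d '' S (d - 1) i)
    (hq : ∃ q : ℤ × ℤ, ∀ i, q ∈ S D i) :
    n - 1 ≤ 2 * D ^ 2 + 2 * D + 1 :=
  relu_grid_depth_lower_bound_general n D m hloc o ho S hS0 hS hq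
end

section
/- Let n ≥ 1 and j ≥ 1, and set α = 2^{-j}. For x : BitVec n define h(x) : BitVec (n+j) by h(x) = x.signExtend(n+j) if x.msb = true, and h(x) = (x.signExtend(n+j)) <<< j (left shift by j) if x.msb = false. Then ((h(x)).toInt : ℚ) / 2^j = max((x.toInt : ℚ), α · (x.toInt : ℚ)); equivalently, (h(x)).toInt = x.toInt if x.msb = true and (h(x)).toInt = 2^j · x.toInt if x.msb = false. (This is the logical correctness of the constant-T-depth Leaky ReLU circuit for two's-complement input, where the output is a fixed-point number with j fractional bits whose value is its two's-complement integer divided by 2^j.) -/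
/-!
Sign extension preserves the two's-complement value, and shifting the `j`-bit sign extension of
`x` left by `j` pushes out exactly the `j` copies of the sign bit, leaving `x` followed by `j`
zeros, whose value is `2 ^ j * x.toInt`. Since `2⁻ʲ ≤ 1`, the maximum is `x.toInt` when `x` is
nonnegative (`msb = false`) and `2⁻ʲ * x.toInt` when it is negative (`msb = true`).
-/

namespace BitVec

theorem signExtend_add_shiftLeft_eq_shiftLeftZeroExtend {w : ℕ} (x : BitVec w) (k : ℕ) :
    x.signExtend (w + k) <<< k = x.shiftLeftZeroExtend k := by
  rw [shiftLeftZeroExtend_eq]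
  ext i hi
  simp only [getElem_shiftLeft, getElem_signExtend, getElem_setWidth]
  grind

theorem toInt_signExtend_add_shiftLeft {w : ℕ} (x : BitVec w) (k : ℕ) :
    (x.signExtend (w + k) <<< k).toInt = x.toInt * 2 ^ k := by
  rw [signExtend_add_shiftLeft_eq_shiftLeftZeroExtend, toInt_shiftLeftZeroExtend]

end BitVec

theorem leaky_relu_circuit_twos_complement_general (n j : ℕ)
    (x : BitVec n) :
    (((if x.msb then x.signExtend (n + j)
        else x.signExtend (n + j) <<< j).toInt : ℚ)) / 2 ^ j =
      max ((x.toInt : ℚ)) ((1 / 2 ^ j) * (x.toInt : ℚ)) := by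
  have hα : (1 / 2 ^ j : ℚ) ≤ 1 := div_le_one_of_le₀ (one_le_pow₀ one_le_two) (by positivity)
  cases hmsb : x.msb
  · have hx : (0 : ℚ) ≤ x.toInt := by exact_mod_cast BitVec.toInt_nonneg_of_msb_false hmsb
    rw [if_neg Bool.false_ne_true, BitVec.toInt_signExtend_add_shiftLeft,
      max_eq_left (mul_le_of_le_one_left hx hα)]
    push_cast
    field_simp
  · have hx : (x.toInt : ℚ) < 0 := by exact_mod_cast BitVec.toInt_neg_of_msb_true hmsb
    rw [if_pos rfl, BitVec.toInt_signExtend_of_le (Nat.le_add_right n j),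
      max_eq_right (le_mul_of_le_one_left hx.le hα)]
    ring

/-- Correctness of the constant-T-depth Leaky ReLU circuit for
two's-complement input with `α = 2⁻ʲ`: the output `h x : BitVec (n+j)` is the
sign extension of `x` when `msb x = true` and the sign extension shifted left
by `j` when `msb x = false`; its fixed-point value `(h x).toInt / 2^j` equals
`max(x.toInt, α · x.toInt)`. -/
theorem leaky_relu_circuit_twos_complement (n j : ℕ) (hn : 1 ≤ n) (hj : 1 ≤ j)
    (x : BitVec n) :
    (((if x.msb then x.signExtend (n + j)
        else x.signExtend (n + j) <<< j).toInt : ℚ)) / 2 ^ j =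
      max ((x.toInt : ℚ)) ((1 / 2 ^ j) * (x.toInt : ℚ)) :=
  leaky_relu_circuit_twos_complement_general n j x
end

section
/- Let n ≥ 1 and j ≥ 1, and set α = 2^{-j}. Let x be an n-bit vector in sign-magnitude (true form) representation with sign s = x.msb, magnitude m = the unsigned value of the low n-1 bits, and value v = (-1)^s · m. Define the (n+j)-bit sign-magnitude output h(x) as follows: if s = false, the output has sign 0, the magnitude bits of x shifted to the integer positions, and j zero fractional bits (magnitude numerator m·2^j); if s = true, the output has sign 1 and magnitude numerator m (the bits of x placed j positions lower, with the intermediate bits left at 0). Then the fixed-point value of h(x), namely (-1)^{sign} · (magnitude numerator)/2^j, equals max(v, α·v). (This is the correctness of the Leaky ReLU circuit for true-form coding, where no bit flips are needed on the intermediate bits.) -/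
section LeakyReLU

variable {K : Type*} [Field K] [LinearOrder K] [IsStrictOrderedRing K] {α v : K}

theorem max_mul_self_of_nonneg (hα : α ≤ 1) (hv : 0 ≤ v) : max v (α * v) = v :=
  max_eq_left (mul_le_of_le_one_left hv hα)

theorem max_mul_self_of_nonpos (hα : α ≤ 1) (hv : v ≤ 0) : max v (α * v) = α * v :=
  max_eq_right (by nlinarith)

end LeakyReLU

theorem leaky_relu_circuit_sign_magnitude_general (n j : ℕ)
    (x : BitVec n) :
    (-1 : ℚ) ^ x.msb.toNat *
        (((if x.msb then x.toNat % 2 ^ (n - 1)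
            else (x.toNat % 2 ^ (n - 1)) * 2 ^ j : ℕ)) : ℚ) / 2 ^ j =
      max ((-1 : ℚ) ^ x.msb.toNat * ((x.toNat % 2 ^ (n - 1) : ℕ) : ℚ))
        ((1 / 2 ^ j) *
          ((-1 : ℚ) ^ x.msb.toNat * ((x.toNat % 2 ^ (n - 1) : ℕ) : ℚ))) := by
  set m : ℚ := ((x.toNat % 2 ^ (n - 1) : ℕ) : ℚ)
  have hm : 0 ≤ m := Nat.cast_nonneg _
  have hα : (1 : ℚ) / 2 ^ j ≤ 1 := div_le_one_of_le₀ (one_le_pow₀ one_le_two) (by positivity)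
  cases x.msb with
  | false =>
    rw [max_mul_self_of_nonneg hα (by simpa using hm)]
    simp only [Bool.toNat_false, pow_zero, one_mul, Bool.false_eq_true, if_false, Nat.cast_mul,
      Nat.cast_pow, Nat.cast_ofNat]
    exact mul_div_cancel_right₀ m (by positivity)
  | true =>
    rw [max_mul_self_of_nonpos hα (by simpa using hm)]
    simp only [if_true]
    ring

/-- Correctness of the Leaky ReLU circuit for sign-magnitude (true form)
coding with `α = 2⁻ʲ`: the input `x` has sign `s = msb x`, magnitude `m`
(the unsigned value of its low `n-1` bits) and value `v = (-1)^s · m`.  The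
output has sign `s` and magnitude numerator `M = m · 2^j` if `s = false`
(bits shifted to the integer positions) and `M = m` if `s = true` (bits placed
`j` positions lower); its fixed-point value `(-1)^s · M / 2^j` equals
`max(v, α·v)`. -/
theorem leaky_relu_circuit_sign_magnitude (n j : ℕ) (hn : 1 ≤ n) (hj : 1 ≤ j)
    (x : BitVec n) :
    (-1 : ℚ) ^ x.msb.toNat *
        (((if x.msb then x.toNat % 2 ^ (n - 1)
            else (x.toNat % 2 ^ (n - 1)) * 2 ^ j : ℕ)) : ℚ) / 2 ^ j =
      max ((-1 : ℚ) ^ x.msb.toNat * ((x.toNat % 2 ^ (n - 1) : ℕ) : ℚ))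
        ((1 / 2 ^ j) *
          ((-1 : ℚ) ^ x.msb.toNat * ((x.toNat % 2 ^ (n - 1) : ℕ) : ℚ))) :=
  leaky_relu_circuit_sign_magnitude_general n j x
end
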